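/- arXiv:1302.5281 — 7 statements merged into one kernel-verified Lean document; each statement's English description precedes it below -/
import Mathlib

section
/- Let λ ∈ (1,2] and β ∈ (0,1) be real numbers, and define f(α) = (1/(λ−1))·ln( α^λ·β^{1−λ} + (1−α)^λ·(β⁻¹−β)^{1−λ} ), where all powers are real powers. Then f is monotone nondecreasing on the interval [β,1]: for all real α₁, α₂ with β ≤ α₁ ≤ α₂ ≤ 1, f(α₁) ≤ f(α₂). (This is Property 2 of the quantity 𝔻_λ(α‖β).) -/
/-!
Writing `d = β⁻¹ - β`, the argument of the logarithm is `β (α/β)^λ + d ((1-α)/d)^λ`.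
Its derivative `λ ((α/β)^(λ-1) - ((1-α)/d)^(λ-1))` is nonnegative as soon as
`α/β ≥ (1-α)/d`, i.e. for `α ≥ β/(β+d) = β²`, and `β² ≤ β`.
-/

open Set

namespace Real

variable {p u v : ℝ}

theorem rpow_mul_rpow_one_sub {x y : ℝ} (hx : 0 ≤ x) (hy : 0 < y) (p : ℝ) :
    x ^ p * y ^ (1 - p) = y * (x / y) ^ p := by
  rw [div_rpow hx hy.le, rpow_sub hy, rpow_one]
  field_simp

theorem hasDerivAt_mul_div_rpow_add_mul_one_sub_div_rpow (hp : 1 ≤ p) (hu : 0 < u)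
    (hv : 0 < v) (α : ℝ) :
    HasDerivAt (fun α => u * (α / u) ^ p + v * ((1 - α) / v) ^ p)
      (p * ((α / u) ^ (p - 1) - ((1 - α) / v) ^ (p - 1))) α := by
  have hleft := (((hasDerivAt_id' α).div_const u).rpow_const (Or.inr hp)).const_mul u
  have hright :=
    ((((hasDerivAt_id' α).const_sub 1).div_const v).rpow_const (Or.inr hp)).const_mul v
  refine (hleft.add hright).congr_deriv ?_
  field_simp
  ring

theorem monotoneOn_mul_div_rpow_add_mul_one_sub_div_rpow (hp : 1 ≤ p) (hu : 0 < u)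
    (hv : 0 < v) :
    MonotoneOn (fun α => u * (α / u) ^ p + v * ((1 - α) / v) ^ p) (Icc (u / (u + v)) 1) := by
  have hderiv := hasDerivAt_mul_div_rpow_add_mul_one_sub_div_rpow hp hu hv
  refine monotoneOn_of_deriv_nonneg (convex_Icc _ _)
    (fun α _ => (hderiv α).continuousAt.continuousWithinAt)
    (fun α _ => (hderiv α).differentiableAt.differentiableWithinAt) fun α hα => ?_
  rw [interior_Icc] at hα
  obtain ⟨hα₀, hα₁⟩ := hα
  rw [(hderiv α).deriv]
  have hratio : (1 - α) / v ≤ α / u := by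
    rw [div_lt_iff₀ (by positivity)] at hα₀
    rw [div_le_div_iff₀ hv hu]
    linarith
  have hpow := rpow_le_rpow (div_nonneg (by linarith) hv.le) hratio (by linarith : 0 ≤ p - 1)
  exact mul_nonneg (by linarith) (by linarith)

end Real

open Real in
theorem binD_monotoneOn_general (lam β : ℝ) (hlam₁ : 1 < lam)
    (hβ₀ : 0 < β) (hβ₁ : β < 1) :
    MonotoneOn (fun α : ℝ =>
      (1 / (lam - 1)) *
        Real.log (α ^ lam * β ^ (1 - lam) + (1 - α) ^ lam * (β⁻¹ - β) ^ (1 - lam)))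
      (Set.Icc β 1) := by
  have hd : 0 < β⁻¹ - β := by
    rw [sub_pos]
    exact lt_of_lt_of_le hβ₁ ((one_le_inv₀ hβ₀).2 hβ₁.le)
  have hmin : β / (β + (β⁻¹ - β)) ≤ β := by
    rw [add_sub_cancel, div_inv_eq_mul]
    nlinarith
  have hmono := (monotoneOn_mul_div_rpow_add_mul_one_sub_div_rpow hlam₁.le hβ₀ hd).mono
    (Icc_subset_Icc_left hmin)
  intro a ha b hb hab
  have ha₀ : 0 < a := hβ₀.trans_le ha.1
  have ha₁ : 0 ≤ 1 - a := sub_nonneg.2 ha.2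
  simp only [rpow_mul_rpow_one_sub ha₀.le hβ₀, rpow_mul_rpow_one_sub ha₁ hd,
    rpow_mul_rpow_one_sub (hβ₀.trans_le hb.1).le hβ₀, rpow_mul_rpow_one_sub (sub_nonneg.2 hb.2) hd]
  have hpos : 0 < β * (a / β) ^ lam + (β⁻¹ - β) * ((1 - a) / (β⁻¹ - β)) ^ lam := by positivity
  exact mul_le_mul_of_nonneg_left (log_le_log hpos (hmono ha hb hab))
    (one_div_nonneg.2 (by linarith))

/-- Property 2: monotonicity of the binary Rényi quantity `𝔻_λ(α‖β)` in `α`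
on the interval `[β, 1]`, for `λ ∈ (1,2]` and `β ∈ (0,1)`. -/
theorem binD_monotoneOn (lam β : ℝ) (hlam₁ : 1 < lam) (hlam₂ : lam ≤ 2)
    (hβ₀ : 0 < β) (hβ₁ : β < 1) :
    MonotoneOn (fun α : ℝ =>
      (1 / (lam - 1)) *
        Real.log (α ^ lam * β ^ (1 - lam) + (1 - α) ^ lam * (β⁻¹ - β) ^ (1 - lam)))
      (Set.Icc β 1) :=
  binD_monotoneOn_general lam β hlam₁ hβ₀ hβ₁
end

section
/- (Quantum Sibson identity.) Let A, B be nonempty finite types, λ > 1 a real number, ρ a density matrix indexed by A×B, and σ a positive definite density matrix indexed by B. Set T := Tr[ (Tr_A(ρ^λ))^{1/λ} ] (which is a positive real number) and σ* := (Tr_A(ρ^λ))^{1/λ} / T. Then D_λ(ρ ‖ 1_A⊗σ) = D_λ(σ* ‖ σ) + (λ/(λ−1))·ln T. -/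
open scoped Kronecker
open Matrix
open scoped ComplexOrder

/-- Apply a real function to a Hermitian matrix via the functional calculus
(spectral decomposition); returns 0 for non-Hermitian input. -/
noncomputable def matFun {n : Type*} [Fintype n] [DecidableEq n]
    (M : Matrix n n ℂ) (f : ℝ → ℝ) : Matrix n n ℂ :=
  if h : M.IsHermitian then
    (h.eigenvectorUnitary : Matrix n n ℂ) *
      Matrix.diagonal (fun i => (f (h.eigenvalues i) : ℂ)) *
      (star (h.eigenvectorUnitary : Matrix n n ℂ))
  else 0

/-- Real power of a (Hermitian positive semidefinite) matrix, with the
convention `0 ^ t = 0` for every real `t`. -/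
noncomputable def mpow {n : Type*} [Fintype n] [DecidableEq n]
    (M : Matrix n n ℂ) (t : ℝ) : Matrix n n ℂ :=
  matFun M (fun x => if x = 0 then 0 else x ^ t)

/-- Real part of the trace. -/
noncomputable def trR {n : Type*} [Fintype n] (M : Matrix n n ℂ) : ℝ :=
  (Matrix.trace M).re

/-- Partial trace over the first tensor factor. -/
noncomputable def ptrA {A B : Type*} [Fintype A]
    (M : Matrix (A × B) (A × B) ℂ) : Matrix B B ℂ :=
  Matrix.of fun b b' => ∑ a : A, M (a, b) (a, b')

/-- Quantum Rényi divergence of order `lam`. -/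
noncomputable def renyiD {n : Type*} [Fintype n] [DecidableEq n]
    (lam : ℝ) (X Y : Matrix n n ℂ) : ℝ :=
  (1 / (lam - 1)) * Real.log (trR (mpow X lam * mpow Y (1 - lam)))

/-- The quantity `K_lam(A⟩B)_ρ`: infimum over positive definite density
matrices `σ` on `B` of `D_lam(ρ ‖ 1_A ⊗ σ)`. -/
noncomputable def Kinf {A B : Type*} [Fintype A] [Fintype B]
    [DecidableEq A] [DecidableEq B]
    (lam : ℝ) (ρ : Matrix (A × B) (A × B) ℂ) : ℝ :=
  ⨅ σ : {σ : Matrix B B ℂ // σ.PosDef ∧ σ.trace = 1},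
    renyiD lam ρ ((1 : Matrix A A ℂ) ⊗ₖ (σ : Matrix B B ℂ))

/-- The CPTP map determined by a finite family of Kraus operators. -/
noncomputable def krausMap {ι n m : Type*} [Fintype ι] [Fintype n] [Fintype m]
    (K : ι → Matrix m n ℂ) (X : Matrix n n ℂ) : Matrix m m ℂ :=
  ∑ j, K j * X * (K j)ᴴ

/-- Trace of the positive part of a Hermitian matrix. -/
noncomputable def trPos {n : Type*} [Fintype n] [DecidableEq n]
    (X : Matrix n n ℂ) : ℝ :=
  if h : X.IsHermitian then ∑ i, max (h.eigenvalues i) 0 else 0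

/-- Binary Rényi quantity `𝔻_lam(α‖β)`. -/
noncomputable def binD (lam α β : ℝ) : ℝ :=
  (1 / (lam - 1)) *
    Real.log (α ^ lam * β ^ (1 - lam) + (1 - α) ^ lam * (β⁻¹ - β) ^ (1 - lam))

/-!
For `t ≠ 0`, `mpow · t` is the continuous functional calculus of `x ↦ x ^ t`, as then
`0 ^ t = 0`. Write `M = Tr_A ρ^λ` and `N = σ^{1-λ}`. Since `X ↦ 1 ⊗ X` is a star algebra
homomorphism, `(1 ⊗ σ)^{1-λ} = 1 ⊗ N`, and the partial trace turns `Tr(ρ^λ (1 ⊗ N))` into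
`Tr(M N)`. On the other side `σ*^λ = T^{-λ} M`, because the powers `λ` and `1/λ` cancel on the
nonnegative spectrum of `M`. Both divergences are thus logarithms of multiples of `Tr(M N)`, and the
identity is arithmetic with logarithms. Positivity of `T` and of `Tr(M N)` holds because `M` is
positive semidefinite and nonzero, as `ρ` is, and `N` is positive definite.
-/

open scoped MatrixOrder

namespace Matrix

section FunctionalCalculus

variable {n : Type*} [Fintype n] [DecidableEq n]

lemma matFun_eq_cfc (M : Matrix n n ℂ) (f : ℝ → ℝ) : matFun M f = cfc f M := by
  by_cases h : M.IsHermitian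
  · rw [h.cfc_eq, matFun, dif_pos h]
    rfl
  · rw [matFun, dif_neg h, cfc_apply_of_not_predicate M (p := IsSelfAdjoint) h]

lemma mpow_eq_cfc_rpow (M : Matrix n n ℂ) {t : ℝ} (ht : t ≠ 0) :
    mpow M t = cfc (· ^ t : ℝ → ℝ) M := by
  rw [mpow, matFun_eq_cfc]
  congr 1
  ext x
  split_ifs with hx <;> simp [hx, Real.zero_rpow ht]

lemma cfc_rpow_nonneg (M : Matrix n n ℂ) (hM : 0 ≤ M) (t : ℝ) : 0 ≤ cfc (· ^ t : ℝ → ℝ) M :=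
  cfc_nonneg fun _ hx => Real.rpow_nonneg (spectrum_nonneg_of_nonneg hM hx) t

lemma isStrictlyPositive_cfc_rpow {M : Matrix n n ℂ} (hM : IsStrictlyPositive M) (t : ℝ) :
    IsStrictlyPositive (cfc (· ^ t : ℝ → ℝ) M) :=
  (cfc_isStrictlyPositive_iff _ M (M.finite_real_spectrum.continuousOn _)).mpr fun x hx =>
    Real.rpow_pos_of_pos ((StarOrderedRing.isStrictlyPositive_iff_spectrum_pos M).mp hM x hx) t

lemma cfc_rpow_smul_cfc_rpow_inv {M : Matrix n n ℂ} (hM : 0 ≤ M) {t : ℝ} (ht : t ≠ 0)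
    {c : ℝ} (hc : 0 ≤ c) :
    cfc (· ^ t : ℝ → ℝ) (c • cfc (· ^ t⁻¹ : ℝ → ℝ) M) = c ^ t • M := by
  have hcont (f : ℝ → ℝ) := M.finite_real_spectrum.continuousOn f
  calc cfc (· ^ t) (c • cfc (· ^ t⁻¹) M)
      = cfc (· ^ t) (cfc (fun x => c * x ^ t⁻¹) M) := by rw [cfc_const_mul c _ M (hcont _)]
    _ = cfc (fun x => (c * x ^ t⁻¹) ^ t) M :=
      (cfc_comp' _ _ M ((M.finite_real_spectrum.image _).continuousOn _) (hcont _)).symm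
    _ = cfc (fun x => c ^ t * x) M := cfc_congr fun x hx => by
      have hx : 0 ≤ x := spectrum_nonneg_of_nonneg hM hx
      rw [Real.mul_rpow hc (Real.rpow_nonneg hx _), Real.rpow_inv_rpow hx ht]
    _ = c ^ t • M := by rw [cfc_const_mul _ _ M (hcont _), cfc_id' ℝ M]

lemma cfc_rpow_ne_zero {M : Matrix n n ℂ} (hM : 0 ≤ M) (hM0 : M ≠ 0) {t : ℝ} (ht : t ≠ 0) :
    cfc (· ^ t : ℝ → ℝ) M ≠ 0 := by
  intro h
  have hM' := cfc_rpow_smul_cfc_rpow_inv hM (inv_ne_zero ht) zero_le_one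
  rw [inv_inv, one_smul, h, cfc_apply_zero, Real.zero_rpow (inv_ne_zero ht), map_zero,
    Real.one_rpow, one_smul] at hM'
  exact hM0 hM'.symm

end FunctionalCalculus

section TracePositivity

variable {𝕜 n : Type*} [RCLike 𝕜] [Fintype n]

lemma trace_pos_of_nonneg_of_ne_zero {M : Matrix n n 𝕜} (hM : 0 ≤ M) (hM0 : M ≠ 0) :
    0 < M.trace :=
  have hM := nonneg_iff_posSemidef.mp hM
  hM.trace_nonneg.lt_of_ne' (mt hM.trace_eq_zero_iff.mp hM0)

lemma trace_mul_pos_of_isStrictlyPositive [DecidableEq n] {M N : Matrix n n 𝕜} (hM : 0 ≤ M)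
    (hM0 : M ≠ 0) (hN : IsStrictlyPositive N) : 0 < (M * N).trace := by
  set S := CFC.sqrt N
  have hS : star S = S := (CFC.sqrt_nonneg N).isSelfAdjoint
  have hSM : (M * N).trace = (star S * M * S).trace := by
    rw [hS, ← CFC.sqrt_mul_sqrt_self N hN.nonneg, ← Matrix.mul_assoc, trace_mul_cycle]
  rw [hSM]
  refine trace_pos_of_nonneg_of_ne_zero (star_left_conjugate_nonneg hM S) fun h => hM0 ?_
  rwa [hN.sqrt.isUnit.mul_left_eq_zero, hN.sqrt.isUnit.star.mul_right_eq_zero] at h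

end TracePositivity

section Kronecker

variable (A : Type*) {B : Type*} [Fintype A] [Fintype B] [DecidableEq A] [DecidableEq B]

def oneKroneckerStarAlgHom : Matrix B B ℂ →⋆ₐ[ℂ] Matrix (A × B) (A × B) ℂ where
  toFun X := (1 : Matrix A A ℂ) ⊗ₖ X
  map_one' := one_kronecker_one
  map_mul' X Y := by rw [← mul_kronecker_mul, one_mul]
  map_zero' := kronecker_zero _
  map_add' := kronecker_add _
  commutes' r := by
    simp only [Algebra.algebraMap_eq_smul_one, kronecker_smul, one_kronecker_one]
  map_star' X := by
    simp only [star_eq_conjTranspose, conjTranspose_kronecker, conjTranspose_one]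

variable {A}

lemma cfc_one_kronecker (f : ℝ → ℝ) {X : Matrix B B ℂ} (hX : IsSelfAdjoint X) :
    cfc f ((1 : Matrix A A ℂ) ⊗ₖ X) = (1 : Matrix A A ℂ) ⊗ₖ cfc f X :=
  ((oneKroneckerStarAlgHom A).map_cfc f X (X.finite_real_spectrum.continuousOn f)
    (LinearMap.continuous_of_finiteDimensional (oneKroneckerStarAlgHom A).toLinearMap) hX
    (hX.map _)).symm

end Kronecker

section PartialTrace

variable {A B : Type*} [Fintype A]

lemma ptrA_nonneg {P : Matrix (A × B) (A × B) ℂ} (hP : 0 ≤ P) : 0 ≤ ptrA P := by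
  have hsum : ptrA P = ∑ a : A, P.submatrix (fun b => (a, b)) (fun b => (a, b)) := by
    ext b b'
    simp [ptrA, Matrix.sum_apply]
  rw [hsum]
  exact Finset.sum_nonneg fun a _ => (nonneg_iff_posSemidef.mp hP).submatrix _ |>.nonneg

variable [Fintype B]

lemma trace_ptrA (P : Matrix (A × B) (A × B) ℂ) : (ptrA P).trace = P.trace := by
  simp only [trace, diag, ptrA, of_apply, Fintype.sum_prod_type]
  exact Finset.sum_comm

lemma ptrA_ne_zero {P : Matrix (A × B) (A × B) ℂ} (hP : 0 ≤ P) (hP0 : P ≠ 0) : ptrA P ≠ 0 :=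
  fun h => (trace_pos_of_nonneg_of_ne_zero hP hP0).ne' (by rw [← trace_ptrA, h, trace_zero])

lemma trace_mul_one_kronecker [DecidableEq A] (P : Matrix (A × B) (A × B) ℂ) (N : Matrix B B ℂ) :
    (P * ((1 : Matrix A A ℂ) ⊗ₖ N)).trace = (ptrA P * N).trace := by
  simp only [trace, diag_apply, mul_apply, kroneckerMap_apply, one_apply, ite_mul, one_mul,
    zero_mul, mul_ite, mul_zero, Fintype.sum_prod_type, Finset.sum_ite_irrel,
    Finset.sum_const_zero, Finset.sum_ite_eq', Finset.mem_univ, ↓reduceIte, ptrA, of_apply,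
    Finset.sum_mul]
  rw [Finset.sum_comm]
  exact Finset.sum_congr rfl fun _ _ => Finset.sum_comm

end PartialTrace

end Matrix

theorem quantum_sibson_identity_general
    {A B : Type*} [Fintype A] [Fintype B] [DecidableEq A] [DecidableEq B]
    (lam : ℝ) (hlam : 1 < lam)
    (ρ : Matrix (A × B) (A × B) ℂ) (hρ : ρ.PosSemidef ∧ ρ.trace = 1)
    (σ : Matrix B B ℂ) (hσ : σ.PosDef ∧ σ.trace = 1)
    (T : ℝ) (hT : T = trR (mpow (ptrA (mpow ρ lam)) (1 / lam)))
    (σstar : Matrix B B ℂ)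
    (hσstar : σstar = (T : ℂ)⁻¹ • mpow (ptrA (mpow ρ lam)) (1 / lam)) :
    0 < T ∧
      renyiD lam ρ ((1 : Matrix A A ℂ) ⊗ₖ σ) =
        renyiD lam σstar σ + (lam / (lam - 1)) * Real.log T := by
  obtain ⟨hρ, hρtr⟩ := hρ
  have hlam0 : lam ≠ 0 := (zero_lt_one.trans hlam).ne'
  have hlam1 : 1 - lam ≠ 0 := sub_ne_zero.mpr hlam.ne
  rw [one_div lam] at hT hσstar
  simp only [renyiD, mpow_eq_cfc_rpow _ hlam0, mpow_eq_cfc_rpow _ hlam1,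
    mpow_eq_cfc_rpow _ (inv_ne_zero hlam0)] at hT hσstar ⊢
  set M := ptrA (cfc (· ^ lam : ℝ → ℝ) ρ)
  set N := cfc (· ^ (1 - lam) : ℝ → ℝ) σ
  have hρ0 : ρ ≠ 0 := fun h => by simp [h] at hρtr
  have hP := cfc_rpow_nonneg ρ hρ.nonneg lam
  have hM : 0 ≤ M := ptrA_nonneg hP
  have hM0 : M ≠ 0 := ptrA_ne_zero hP (cfc_rpow_ne_zero hρ.nonneg hρ0 hlam0)
  have hTpos : 0 < T := hT ▸ (Complex.pos_iff.mp (trace_pos_of_nonneg_of_ne_zero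
    (cfc_rpow_nonneg M hM _) (cfc_rpow_ne_zero hM hM0 (inv_ne_zero hlam0)))).1
  have hX : 0 < trR (M * N) := (Complex.pos_iff.mp (trace_mul_pos_of_isStrictlyPositive hM hM0
    (isStrictlyPositive_cfc_rpow hσ.1.isStrictlyPositive _))).1
  have hLHS : trR (cfc (· ^ lam : ℝ → ℝ) ρ * cfc (· ^ (1 - lam) : ℝ → ℝ) (1 ⊗ₖ σ))
      = trR (M * N) := by
    rw [cfc_one_kronecker _ hσ.1.isHermitian, trR, trace_mul_one_kronecker, trR]
  have hRHS : trR (cfc (· ^ lam : ℝ → ℝ) σstar * N) = T⁻¹ ^ lam * trR (M * N) := by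
    rw [hσstar, ← Complex.ofReal_inv, Complex.coe_smul,
      cfc_rpow_smul_cfc_rpow_inv hM hlam0 (inv_nonneg.mpr hTpos.le), smul_mul_assoc, trR, trR,
      trace_smul, Complex.smul_re]
    rfl
  refine ⟨hTpos, ?_⟩
  rw [hLHS, hRHS, Real.log_mul (by positivity) hX.ne', Real.log_rpow (inv_pos.mpr hTpos),
    Real.log_inv]
  field_simp
  ring

/-- Quantum Sibson identity:
`D_λ(ρ ‖ 1_A⊗σ) = D_λ(σ* ‖ σ) + (λ/(λ−1))·ln T` where
`T = Tr[(Tr_A ρ^λ)^{1/λ}]` and `σ* = (Tr_A ρ^λ)^{1/λ}/T`; moreover `T > 0`. -/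
theorem quantum_sibson_identity
    {A B : Type*} [Fintype A] [Fintype B] [DecidableEq A] [DecidableEq B]
    [Nonempty A] [Nonempty B]
    (lam : ℝ) (hlam : 1 < lam)
    (ρ : Matrix (A × B) (A × B) ℂ) (hρ : ρ.PosSemidef ∧ ρ.trace = 1)
    (σ : Matrix B B ℂ) (hσ : σ.PosDef ∧ σ.trace = 1)
    (T : ℝ) (hT : T = trR (mpow (ptrA (mpow ρ lam)) (1 / lam)))
    (σstar : Matrix B B ℂ)
    (hσstar : σstar = (T : ℂ)⁻¹ • mpow (ptrA (mpow ρ lam)) (1 / lam)) :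
    0 < T ∧
      renyiD lam ρ ((1 : Matrix A A ℂ) ⊗ₖ σ) =
        renyiD lam σstar σ + (lam / (lam - 1)) * Real.log T :=
  quantum_sibson_identity_general lam hlam ρ hρ σ hσ T hT σstar hσstar
end

section
/- (Analytic content of the strong converse for the quantum erasure channel.) Let d ≥ 2 be a natural number, p ∈ [0,1] real, and R a real number with R > 0 and R > (1−2p)·ln d. Then there exists s ∈ [−1/2, 0) such that s·R + ln( (1−p)·d^{−s} + p·d^{s} ) < 0; equivalently, s·R − E₀(s) < 0 where E₀(s) := −ln( (1−p)·d^{−s} + p·d^{s} ). -/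
/-! The function `f s = s * R + log ((1 - p) * d ^ (-s) + p * d ^ s)` vanishes at `0` and has
derivative `R - (1 - 2p) log d > 0` there, so it is negative just to the left of `0`. -/

open Filter Set Topology

theorem HasDerivAt.exists_mem_Ico_lt_of_pos {f : ℝ → ℝ} {f' a b : ℝ} (hf : HasDerivAt f f' a)
    (hf' : 0 < f') (hb : b < a) : ∃ s ∈ Ico b a, f s < f a := by
  have hslope : ∀ᶠ s in 𝓝[<] a, 0 < slope f a s :=
    (hasDerivAt_iff_tendsto_slope_left_right.mp hf).1.eventually (eventually_gt_nhds hf')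
  have hnear : ∀ᶠ s in 𝓝[<] a, s ∈ Ioo b a := Ioo_mem_nhdsLT hb
  obtain ⟨s, hs_slope, hs⟩ := (hslope.and hnear).exists
  refine ⟨s, Ioo_subset_Ico_self hs, ?_⟩
  rw [slope_def_field] at hs_slope
  have h := mul_neg_of_pos_of_neg hs_slope (sub_neg.mpr hs.2)
  rw [div_mul_cancel₀ _ (sub_ne_zero.mpr hs.2.ne)] at h
  linarith

theorem hasDerivAt_log_one_sub_mul_rpow_neg_add_mul_rpow {b : ℝ} (hb : 0 < b) (p : ℝ) :
    HasDerivAt (fun s : ℝ => Real.log ((1 - p) * b ^ (-s) + p * b ^ s))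
      ((2 * p - 1) * Real.log b) 0 := by
  have hneg : HasDerivAt (fun s : ℝ => b ^ (-s)) (-Real.log b) 0 := by
    simpa using (hasDerivAt_neg (0 : ℝ)).const_rpow hb
  have hpos : HasDerivAt (fun s : ℝ => b ^ s) (Real.log b) 0 := by
    simpa using (hasDerivAt_id (0 : ℝ)).const_rpow hb
  have hinner : HasDerivAt (fun s : ℝ => (1 - p) * b ^ (-s) + p * b ^ s)
      ((2 * p - 1) * Real.log b) 0 := by
    rw [show (2 * p - 1) * Real.log b = (1 - p) * -Real.log b + p * Real.log b by ring]
    exact (hneg.const_mul (1 - p)).add (hpos.const_mul p)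
  convert hinner.log (by simp) using 1
  simp

theorem erasure_strong_converse_exponent_general (d : ℕ) (hd : 2 ≤ d) (p R : ℝ)
    (hR : (1 - 2 * p) * Real.log d < R) :
    ∃ s : ℝ, -(1/2) ≤ s ∧ s < 0 ∧
      s * R + Real.log ((1 - p) * (d : ℝ) ^ (-s) + p * (d : ℝ) ^ s) < 0 := by
  have hd₀ : (0 : ℝ) < d := by exact_mod_cast (show 0 < d by omega)
  have hderiv : HasDerivAt (fun s => s * R + Real.log ((1 - p) * (d : ℝ) ^ (-s) + p * (d : ℝ) ^ s))
      (R + (2 * p - 1) * Real.log d) 0 :=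
    (hasDerivAt_mul_const R).add (hasDerivAt_log_one_sub_mul_rpow_neg_add_mul_rpow hd₀ p)
  obtain ⟨s, ⟨hs₁, hs₂⟩, hs⟩ :=
    hderiv.exists_mem_Ico_lt_of_pos (by linarith) (by norm_num : -(1/2 : ℝ) < 0)
  exact ⟨s, hs₁, hs₂, by simpa using hs⟩

/-- Analytic content of the strong converse for the quantum erasure channel:
for rates above `(1−2p)·ln d` there is `s ∈ [−1/2, 0)` making the Gallager
exponent bound exponentially decaying, i.e. `s·R − E₀(s) < 0`. -/
theorem erasure_strong_converse_exponent (d : ℕ) (hd : 2 ≤ d) (p R : ℝ)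
    (hp₀ : 0 ≤ p) (hp₁ : p ≤ 1) (hR₀ : 0 < R)
    (hR : (1 - 2 * p) * Real.log d < R) :
    ∃ s : ℝ, -(1/2) ≤ s ∧ s < 0 ∧
      s * R + Real.log ((1 - p) * (d : ℝ) ^ (-s) + p * (d : ℝ) ^ s) < 0 :=
  erasure_strong_converse_exponent_general d hd p R hR
end

section
/- Let d ≥ 2 be a natural number and p ∈ [0,1] real, and define E₀(s) := −ln( (1−p)·d^{−s} + p·d^{s} ) for real s. Then E₀(s)/s tends to (1−2p)·ln d as s tends to 0 from the left: the function s ↦ E₀(s)/s converges to (1−2p)·ln d along the filter nhdsWithin 0 (Iio 0). (For p ∈ [0,1/2] this limit equals the quantum capacity (1−2p)·ln d of the erasure channel.) -/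
/-!
`E₀` vanishes at `0`, so `E₀(s)/s` is a difference quotient at `0` and its one-sided limit is
`E₀'(0)`. Since the mixture `(1−p)·d^{−s} + p·d^{s}` equals `1` at `0` and has derivative
`(2p−1)·ln d` there, `E₀'(0) = (1−2p)·ln d`.
-/

open Filter Topology Real

theorem HasDerivAt.tendsto_div_nhdsLT_zero {f : ℝ → ℝ} {f' : ℝ} (hf : HasDerivAt f f' 0)
    (hf0 : f 0 = 0) : Tendsto (fun s => f s / s) (𝓝[<] 0) (𝓝 f') := by
  simpa [hf0, div_eq_inv_mul] using hf.tendsto_slope_zero_left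

section Mixture

variable {b : ℝ} (p : ℝ)

theorem hasDerivAt_mixture_rpow_neg_rpow (hb : 0 < b) :
    HasDerivAt (fun s : ℝ => (1 - p) * b ^ (-s) + p * b ^ s) ((2 * p - 1) * log b) 0 := by
  have hpos : HasDerivAt (fun s : ℝ => b ^ s) (log b) 0 := by
    simpa using (hasStrictDerivAt_const_rpow hb 0).hasDerivAt
  have hneg : HasDerivAt (fun s : ℝ => b ^ (-s)) (-log b) 0 := by
    have h := (hasStrictDerivAt_const_rpow hb (-0)).hasDerivAt.comp (0 : ℝ) (hasDerivAt_neg 0)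
    simpa [Function.comp_def] using h
  exact ((hneg.const_mul (1 - p)).add (hpos.const_mul p)).congr_deriv (by ring)

theorem hasDerivAt_neg_log_mixture_rpow_neg_rpow (hb : 0 < b) :
    HasDerivAt (fun s : ℝ => -log ((1 - p) * b ^ (-s) + p * b ^ s)) ((1 - 2 * p) * log b) 0 := by
  refine ((hasDerivAt_mixture_rpow_neg_rpow p hb).log (by simp)).neg.congr_deriv ?_
  simp only [neg_zero, rpow_zero, mul_one, sub_add_cancel, div_one]
  ring

end Mixture

theorem erasure_E0_div_s_tendsto_general (d : ℕ) (hd : 2 ≤ d) (p : ℝ) :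
    Filter.Tendsto
      (fun s : ℝ =>
        (-Real.log ((1 - p) * (d : ℝ) ^ (-s) + p * (d : ℝ) ^ s)) / s)
      (nhdsWithin 0 (Set.Iio 0))
      (nhds ((1 - 2 * p) * Real.log d)) :=
  (hasDerivAt_neg_log_mixture_rpow_neg_rpow p (by positivity)).tendsto_div_nhdsLT_zero
    (by simp)

/-- `E₀(s)/s → (1−2p)·ln d` as `s → 0⁻`, where
`E₀(s) = −ln((1−p)·d^{−s} + p·d^{s})` is the Gallager exponent of the
quantum erasure channel. -/
theorem erasure_E0_div_s_tendsto (d : ℕ) (hd : 2 ≤ d) (p : ℝ)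
    (hp₀ : 0 ≤ p) (hp₁ : p ≤ 1) :
    Filter.Tendsto
      (fun s : ℝ =>
        (-Real.log ((1 - p) * (d : ℝ) ^ (-s) + p * (d : ℝ) ^ s)) / s)
      (nhdsWithin 0 (Set.Iio 0))
      (nhds ((1 - 2 * p) * Real.log d)) :=
  erasure_E0_div_s_tendsto_general d hd p
end

section
/- (Monotonicity of the hockey-stick divergence.) Let n, m be nonempty finite types and let Φ be a ℂ-linear map from matrices indexed by n to matrices indexed by m that is positive (it maps positive semidefinite matrices to positive semidefinite matrices) and trace-preserving (Tr Φ(X) = Tr X for all X). Then for all positive semidefinite matrices ρ, σ indexed by n and every real γ > 0, Tr( (ρ − γσ)⁺ ) ≥ Tr( (Φ(ρ) − γΦ(σ))⁺ ), where for a Hermitian matrix X, Tr(X⁺) denotes the sum of max(μ, 0) over the eigenvalues μ of X (the trace of the positive part of X in the Jordan decomposition). -/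
open scoped Kronecker
open Matrix
open scoped ComplexOrder

/-!
Write `ρ - γσ = P - N` with `P, N ⪰ 0` and `Tr P = Tr (ρ - γσ)⁺` (Jordan decomposition). Then
`Φρ - γΦσ = ΦP - ΦN` is again a difference of positive semidefinite matrices, and
`Tr (A - B)⁺ ≤ Tr A` for any such difference: in an eigenbasis of `A - B` each eigenvalue is
`a_ii - b_ii` with `a_ii, b_ii ≥ 0`. Since `Tr ΦP = Tr P`, the claim follows.
-/

open Unitary

namespace Matrix

variable {n : Type*} [Fintype n] [DecidableEq n]

lemma trace_conjStarAlgAut (U : unitary (Matrix n n ℂ)) (A : Matrix n n ℂ) :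
    (conjStarAlgAut ℂ _ U A).trace = A.trace := by
  rw [conjStarAlgAut_apply, trace_mul_cycle, coe_star_mul_self, one_mul]

lemma PosSemidef.conjStarAlgAut {A : Matrix n n ℂ} (hA : A.PosSemidef)
    (U : unitary (Matrix n n ℂ)) : (conjStarAlgAut ℂ _ U A).PosSemidef :=
  hA.mul_mul_conjTranspose_same _

omit [Fintype n] [DecidableEq n] in
lemma PosSemidef.re_diag_nonneg {A : Matrix n n ℂ} (hA : A.PosSemidef) (i : n) : 0 ≤ (A i i).re :=
  (Complex.nonneg_iff.mp hA.diag_nonneg).1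

lemma IsHermitian.trPos_eq {X : Matrix n n ℂ} (hX : X.IsHermitian) :
    trPos X = ∑ i, max (hX.eigenvalues i) 0 := by
  rw [trPos, dif_pos hX]

lemma trPos_sub_le_re_trace {A B : Matrix n n ℂ} (hA : A.PosSemidef) (hB : B.PosSemidef) :
    trPos (A - B) ≤ A.trace.re := by
  have hY := hA.isHermitian.sub hB.isHermitian
  set V := star hY.eigenvectorUnitary
  have hev (i : n) : hY.eigenvalues i =
      (conjStarAlgAut ℂ _ V A i i).re - (conjStarAlgAut ℂ _ V B i i).re := by
    rw [← Complex.sub_re, ← sub_apply, ← map_sub,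
      congr_fun₂ hY.conjStarAlgAut_star_eigenvectorUnitary i i, diagonal_apply_eq]
    rfl
  calc trPos (A - B) = ∑ i, max (hY.eigenvalues i) 0 := hY.trPos_eq
    _ ≤ ∑ i, (conjStarAlgAut ℂ _ V A i i).re := by
      refine Finset.sum_le_sum fun i _ => max_le ?_ ((hA.conjStarAlgAut V).re_diag_nonneg i)
      linarith [hev i, (hB.conjStarAlgAut V).re_diag_nonneg i]
    _ = A.trace.re := by rw [← trace_conjStarAlgAut V A, trace, Complex.re_sum]; rfl

lemma IsHermitian.exists_posSemidef_sub_eq {X : Matrix n n ℂ} (hX : X.IsHermitian) :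
    ∃ P N : Matrix n n ℂ, P.PosSemidef ∧ N.PosSemidef ∧ X = P - N ∧ P.trace.re = trPos X := by
  have hcfc_psd {f : ℝ → ℝ} (hf : ∀ x, 0 ≤ f x) : (hX.cfc f).PosSemidef :=
    (posSemidef_diagonal_iff.mpr fun i => by simpa using hf _).conjStarAlgAut _
  refine ⟨hX.cfc (max · 0), hX.cfc (fun x => max (-x) 0), hcfc_psd fun _ => le_max_right _ _,
    hcfc_psd fun _ => le_max_right _ _, ?_, ?_⟩
  · rw [IsHermitian.cfc, IsHermitian.cfc, ← map_sub, diagonal_sub]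
    conv_lhs => rw [hX.spectral_theorem]
    congr; ext i
    simp only [Function.comp_apply, ← RCLike.ofReal_sub, max_zero_sub_max_neg_zero_eq_self]
  · rw [IsHermitian.cfc, trace_conjStarAlgAut, trace_diagonal, Complex.re_sum, hX.trPos_eq]
    simp

lemma trPos_map_le {m : Type*} [Fintype m] [DecidableEq m]
    (Φ : Matrix n n ℂ →ₗ[ℂ] Matrix m m ℂ)
    (hpos : ∀ X : Matrix n n ℂ, X.PosSemidef → (Φ X).PosSemidef)
    (htr : ∀ X : Matrix n n ℂ, (Φ X).trace = X.trace) {X : Matrix n n ℂ} (hX : X.IsHermitian) :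
    trPos (Φ X) ≤ trPos X := by
  obtain ⟨P, N, hP, hN, rfl, htrP⟩ := hX.exists_posSemidef_sub_eq
  calc trPos (Φ (P - N)) = trPos (Φ P - Φ N) := by rw [map_sub]
    _ ≤ (Φ P).trace.re := trPos_sub_le_re_trace (hpos P hP) (hpos N hN)
    _ = trPos (P - N) := by rw [htr, htrP]

end Matrix

theorem hockey_stick_monotone_general
    {n m : Type*} [Fintype n] [Fintype m] [DecidableEq n] [DecidableEq m]
    (Φ : Matrix n n ℂ →ₗ[ℂ] Matrix m m ℂ)
    (hpos : ∀ X : Matrix n n ℂ, X.PosSemidef → (Φ X).PosSemidef)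
    (htr : ∀ X : Matrix n n ℂ, (Φ X).trace = X.trace)
    (ρ σ : Matrix n n ℂ) (hρ : ρ.PosSemidef) (hσ : σ.PosSemidef)
    (γ : ℝ) :
    trPos (Φ ρ - (γ : ℂ) • Φ σ) ≤ trPos (ρ - (γ : ℂ) • σ) := by
  have hX : (ρ - (γ : ℂ) • σ).IsHermitian :=
    hρ.isHermitian.sub (hσ.isHermitian.smul (Complex.conj_ofReal γ))
  rw [← map_smul, ← map_sub]
  exact trPos_map_le Φ hpos htr hX

/-- Monotonicity of the hockey-stick divergence under positive
trace-preserving linear maps: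
`Tr((ρ − γσ)⁺) ≥ Tr((Φρ − γΦσ)⁺)`. -/
theorem hockey_stick_monotone
    {n m : Type*} [Fintype n] [Fintype m] [DecidableEq n] [DecidableEq m]
    [Nonempty n] [Nonempty m]
    (Φ : Matrix n n ℂ →ₗ[ℂ] Matrix m m ℂ)
    (hpos : ∀ X : Matrix n n ℂ, X.PosSemidef → (Φ X).PosSemidef)
    (htr : ∀ X : Matrix n n ℂ, (Φ X).trace = X.trace)
    (ρ σ : Matrix n n ℂ) (hρ : ρ.PosSemidef) (hσ : σ.PosSemidef)
    (γ : ℝ) (hγ : 0 < γ) :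
    trPos (Φ ρ - (γ : ℂ) • Φ σ) ≤ trPos (ρ - (γ : ℂ) • σ) :=
  hockey_stick_monotone_general Φ hpos htr ρ σ hρ hσ γ
end

section
/- (Orthogonal additivity of the trace of the positive part.) Let n be a nonempty finite type, I a finite index type, and (X_i)_{i∈I} Hermitian matrices indexed by n such that X_i·X_j = 0 for all i ≠ j. Then Tr( (∑_{i∈I} X_i)⁺ ) = ∑_{i∈I} Tr( X_i⁺ ), where for a Hermitian matrix X, Tr(X⁺) denotes the sum of max(μ, 0) over the eigenvalues μ of X. -/
/-!
Write each `Xᵢ = Xᵢ⁺ - Xᵢ⁻`. Orthogonality `Xᵢ Xⱼ = 0` passes through the continuous functional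
calculus to `Xᵢ⁺ Xⱼ⁻ = 0`, so `∑ Xᵢ = ∑ Xᵢ⁺ - ∑ Xᵢ⁻` is a difference of positive semidefinite
matrices with zero product. By uniqueness of this decomposition, `(∑ Xᵢ)⁺ = ∑ Xᵢ⁺`, and taking
traces gives the claim since `Tr(X⁺) = ∑ max(μ, 0)` over the eigenvalues `μ` of `X`.
-/

open scoped Kronecker
open Matrix
open scoped ComplexOrder

section OrthogonalPosPart

variable {A : Type*} [NonUnitalRing A] [Module ℝ A] [SMulCommClass ℝ A A] [IsScalarTower ℝ A A]
  [StarRing A] [TopologicalSpace A] [NonUnitalContinuousFunctionalCalculus ℝ A IsSelfAdjoint]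
  [IsSemitopologicalRing A] [T2Space A]

/-- `cfcₙ f a` is a limit of polynomials in `a` without constant term, each annihilated by `b`. -/
lemma cfcₙ_mul_eq_zero_of_mul_eq_zero {a b : A} (f : ℝ → ℝ) (hab : a * b = 0) :
    cfcₙ f a * b = 0 := by
  refine cfcₙ_cases (· * b = 0) a f (zero_mul b) fun _ _ ha => ?_
  have := NonUnitalContinuousFunctionalCalculus.compactSpace_quasispectrum (R := ℝ) a
  refine ContinuousMapZero.nonUnitalStarAlgHom_apply_mul_eq_zero _ _ ?_ ?_
    (cfcₙHom_continuous ha) _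
  · rwa [cfcₙHom_id]
  · rwa [star_trivial, cfcₙHom_id]

lemma mul_cfcₙ_eq_zero_of_mul_eq_zero {a b : A} (f : ℝ → ℝ) (hba : b * a = 0) :
    b * cfcₙ f a = 0 := by
  refine cfcₙ_cases (b * · = 0) a f (mul_zero b) fun _ _ ha => ?_
  have := NonUnitalContinuousFunctionalCalculus.compactSpace_quasispectrum (R := ℝ) a
  refine ContinuousMapZero.mul_nonUnitalStarAlgHom_apply_eq_zero _ _ ?_ ?_
    (cfcₙHom_continuous ha) _
  · rwa [cfcₙHom_id]
  · rwa [star_trivial, cfcₙHom_id]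

namespace CFC

lemma posPart_mul_negPart_of_mul_eq_zero {a b : A} (hab : a * b = 0) : a⁺ * b⁻ = 0 :=
  cfcₙ_mul_eq_zero_of_mul_eq_zero _ (mul_cfcₙ_eq_zero_of_mul_eq_zero _ hab)

variable [PartialOrder A] [StarOrderedRing A] [NonnegSpectrumClass ℝ A]

lemma posPart_sum_of_pairwise_mul_eq_zero {ι : Type*} (s : Finset ι) (a : ι → A)
    (hsa : ∀ i ∈ s, IsSelfAdjoint (a i))
    (horth : ∀ i ∈ s, ∀ j ∈ s, i ≠ j → a i * a j = 0) :
    (∑ i ∈ s, a i)⁺ = ∑ i ∈ s, (a i)⁺ := by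
  have hsum : ∑ i ∈ s, a i = ∑ i ∈ s, (a i)⁺ - ∑ i ∈ s, (a i)⁻ := by
    rw [← Finset.sum_sub_distrib]
    exact Finset.sum_congr rfl fun i hi => (posPart_sub_negPart (a i) (hsa i hi)).symm
  have hmul : (∑ i ∈ s, (a i)⁺) * ∑ i ∈ s, (a i)⁻ = 0 := by
    rw [Finset.sum_mul_sum]
    refine Finset.sum_eq_zero fun i hi => Finset.sum_eq_zero fun j hj => ?_
    obtain rfl | hij := eq_or_ne i j
    · exact posPart_mul_negPart (a i)
    · exact posPart_mul_negPart_of_mul_eq_zero (horth i hi j hj hij)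
  exact (posPart_negPart_unique hsum hmul
    (Finset.sum_nonneg fun i _ => posPart_nonneg (a i))
    (Finset.sum_nonneg fun i _ => negPart_nonneg (a i))).1

end CFC

end OrthogonalPosPart

open scoped MatrixOrder

lemma Matrix.IsHermitian.trace_cfc {n 𝕜 : Type*} [Fintype n] [DecidableEq n] [RCLike 𝕜]
    {A : Matrix n n 𝕜} (hA : A.IsHermitian) (f : ℝ → ℝ) :
    (cfc f A).trace = ∑ i, (f (hA.eigenvalues i) : 𝕜) := by
  rw [hA.cfc_eq, IsHermitian.cfc, Unitary.conjStarAlgAut_apply, trace_mul_cycle,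
    Unitary.coe_star_mul_self, one_mul, trace_diagonal]
  rfl

lemma trPos_eq_re_trace_posPart {n : Type*} [Fintype n] [DecidableEq n] {X : Matrix n n ℂ}
    (hX : X.IsHermitian) : trPos X = (X⁺).trace.re := by
  rw [trPos, dif_pos hX, CFC.posPart_def, cfcₙ_eq_cfc, hX.trace_cfc, Complex.re_sum]
  simp [posPart_def]

theorem trPos_orthogonal_additivity_general
    {n : Type*} [Fintype n] [DecidableEq n]
    {I : Type*} [Fintype I]
    (X : I → Matrix n n ℂ)
    (hherm : ∀ i, (X i).IsHermitian)
    (horth : ∀ i j, i ≠ j → X i * X j = 0) :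
    trPos (∑ i, X i) = ∑ i, trPos (X i) := by
  rw [trPos_eq_re_trace_posPart (isSelfAdjoint_sum _ fun i _ => hherm i),
    CFC.posPart_sum_of_pairwise_mul_eq_zero _ _ (fun i _ => hherm i)
      (fun i _ j _ => horth i j), trace_sum, Complex.re_sum]
  exact Finset.sum_congr rfl fun i _ => (trPos_eq_re_trace_posPart (hherm i)).symm

/-- Orthogonal additivity of the trace of the positive part:
for pairwise orthogonal Hermitian matrices, `Tr((∑ X_i)⁺) = ∑ Tr(X_i⁺)`. -/
theorem trPos_orthogonal_additivity
    {n : Type*} [Fintype n] [DecidableEq n] [Nonempty n]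
    {I : Type*} [Fintype I]
    (X : I → Matrix n n ℂ)
    (hherm : ∀ i, (X i).IsHermitian)
    (horth : ∀ i j, i ≠ j → X i * X j = 0) :
    trPos (∑ i, X i) = ∑ i, trPos (X i) :=
  trPos_orthogonal_additivity_general X hherm horth
end

section
/- (Single-use Sibson value for the quantum erasure channel with maximally entangled input.) Let d ≥ 1 be a natural number, p ∈ [0,1] and λ > 1 real. Let A = Fin d, B = Fin (d+1), let φ ∈ ℂ^{A×B} be the unit vector with φ(a,b) = 1/√d if b is the image of a under the canonical embedding Fin d ↪ Fin (d+1) and 0 otherwise, and let e ∈ B be the last element. Define the density matrix ρ := (1−p)·|φ⟩⟨φ| + (p/d)·(1_A ⊗ |e⟩⟨e|) indexed by A×B. Then Tr[ (Tr_A(ρ^{λ}))^{1/λ} ] = (1−p)·d^{(λ−1)/λ} + p·d^{(1−λ)/λ}. Equivalently, with s := 1/λ − 1, the value −ln Tr[ (Tr_A(ρ^{1/(s+1)}))^{s+1} ] equals E₀(s) := −ln( (1−p)·d^{−s} + p·d^{s} ). -/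
open scoped Kronecker
open Matrix
open scoped ComplexOrder

/-! The state is `ρ = (1 - p) • P + (p / d) • Q` with `P = |φ⟩⟨φ|` and `Q = 1 ⊗ |e⟩⟨e|` orthogonal
projections, and its partial traces are `Tr_A P = d⁻¹ • (1 - |e⟩⟨e|)` and `Tr_A Q = d • |e⟩⟨e|`,
again multiples of orthogonal projections. On a combination `∑ cᵢ • eᵢ` of orthogonal idempotents
the functional calculus is `∑ f cᵢ • eᵢ` (for `f 0 = 0`): the spectrum lies among the `cᵢ`, so
`f` may be replaced by a polynomial interpolating it there. Hence both matrix powers act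
coefficientwise and the trace reduces to `((1-p)^λ/d)^{1/λ} d + ((p/d)^λ d)^{1/λ}`. -/

section OrthogonalIdempotents

open Polynomial

variable {R A ι : Type*} [Fintype ι] {e : ι → A}

lemma OrthogonalIdempotents.sum_smul_mul_sum_smul [CommRing R] [Ring A] [Algebra R A]
    (he : OrthogonalIdempotents e) (a b : ι → R) :
    (∑ i, a i • e i) * (∑ i, b i • e i) = ∑ i, (a i * b i) • e i := by
  classical
  simp [Finset.sum_mul, Finset.mul_sum, he.mul_eq, smul_smul, mul_comm]

lemma CompleteOrthogonalIdempotents.sum_smul_pow [CommRing R] [Ring A] [Algebra R A]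
    (he : CompleteOrthogonalIdempotents e) (c : ι → R) (k : ℕ) :
    (∑ i, c i • e i) ^ k = ∑ i, c i ^ k • e i := by
  induction k with
  | zero => simpa using he.complete.symm
  | succ k ih => simp only [pow_succ, ih, he.sum_smul_mul_sum_smul]

lemma CompleteOrthogonalIdempotents.aeval_sum_smul [CommRing R] [Ring A] [Algebra R A]
    (he : CompleteOrthogonalIdempotents e) (c : ι → R) (q : R[X]) :
    aeval (∑ i, c i • e i) q = ∑ i, q.eval (c i) • e i := by
  induction q using Polynomial.induction_on' with
  | add q r hq hr => simp only [map_add, hq, hr, eval_add, add_smul, Finset.sum_add_distrib]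
  | monomial k a =>
    simp only [aeval_monomial, he.sum_smul_pow, eval_monomial, Finset.mul_sum,
      Algebra.algebraMap_eq_smul_one, smul_mul_assoc, one_mul, smul_smul]

lemma CompleteOrthogonalIdempotents.spectrum_sum_smul_subset [Field R] [Ring A] [Algebra R A]
    (he : CompleteOrthogonalIdempotents e) (c : ι → R) :
    spectrum R (∑ i, c i • e i) ⊆ Set.range c := by
  intro z hz
  by_contra hzc
  have hne : ∀ i, z - c i ≠ 0 := fun i h => hzc ⟨i, (sub_eq_zero.1 h).symm⟩
  have hshift : algebraMap R A z - ∑ i, c i • e i = ∑ i, (z - c i) • e i := by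
    simp only [sub_smul, Finset.sum_sub_distrib, ← Finset.smul_sum, he.complete,
      Algebra.algebraMap_eq_smul_one]
  refine spectrum.mem_iff.1 hz
    ⟨⟨∑ i, (z - c i) • e i, ∑ i, (z - c i)⁻¹ • e i, ?_, ?_⟩, hshift.symm⟩ <;>
  · simp only [he.sum_smul_mul_sum_smul, mul_inv_cancel₀ (hne _), inv_mul_cancel₀ (hne _),
      one_smul, he.complete]

end OrthogonalIdempotents

section FunctionalCalculus

variable {A ι : Type*} [Fintype ι] {e : ι → A} {p : A → Prop} [TopologicalSpace A] [Ring A]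
  [StarRing A] [Algebra ℝ A] [ContinuousFunctionalCalculus ℝ A p]

lemma CompleteOrthogonalIdempotents.cfc_sum_smul (he : CompleteOrthogonalIdempotents e)
    (c : ι → ℝ) (f : ℝ → ℝ) (hp : p (∑ i, c i • e i)) :
    cfc f (∑ i, c i • e i) = ∑ i, f (c i) • e i := by
  classical
  set q := Lagrange.interpolate (Finset.univ.image c) id f
  have hq : ∀ i, q.eval (c i) = f (c i) := fun i =>
    Lagrange.eval_interpolate_at_node f Function.injective_id.injOn
      (Finset.mem_image_of_mem c (Finset.mem_univ i))
  calc cfc f (∑ i, c i • e i) = cfc q.eval (∑ i, c i • e i) := by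
        refine cfc_congr fun z hz => ?_
        obtain ⟨i, rfl⟩ := he.spectrum_sum_smul_subset c hz
        exact (hq i).symm
    _ = ∑ i, f (c i) • e i := by
        rw [cfc_polynomial q _ hp, he.aeval_sum_smul]
        simp only [hq]

lemma OrthogonalIdempotents.cfc_sum_smul (he : OrthogonalIdempotents e) (c : ι → ℝ)
    {f : ℝ → ℝ} (hf : f 0 = 0) (hp : p (∑ i, c i • e i)) :
    cfc f (∑ i, c i • e i) = ∑ i, f (c i) • e i := by
  have h := (CompleteOrthogonalIdempotents.option he).cfc_sum_smul (Option.elim · 0 c) f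
    (by simpa [Fintype.sum_option] using hp)
  simpa [Fintype.sum_option, hf] using h

end FunctionalCalculus

section Matrix

variable {n : Type*} [Fintype n] [DecidableEq n]

lemma matFun_eq_cfc {M : Matrix n n ℂ} (hM : M.IsHermitian) (f : ℝ → ℝ) :
    matFun M f = cfc f M := by
  rw [matFun, dif_pos hM, hM.cfc_eq, IsHermitian.cfc, Unitary.conjStarAlgAut_apply]
  rfl

lemma mpow_eq_cfc_rpow {M : Matrix n n ℂ} (hM : M.IsHermitian) {t : ℝ} (ht : t ≠ 0) :
    mpow M t = cfc (fun x : ℝ => x ^ t) M := by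
  rw [mpow, matFun_eq_cfc hM]
  congr 1
  funext x
  split_ifs with hx
  · rw [hx, Real.zero_rpow ht]
  · rfl

lemma mpow_smul_add_smul {P Q : Matrix n n ℂ} (hP : P.IsHermitian) (hQ : Q.IsHermitian)
    (hPP : IsIdempotentElem P) (hQQ : IsIdempotentElem Q) (hQP : Q * P = 0)
    (a b : ℝ) {t : ℝ} (ht : t ≠ 0) :
    mpow (a • P + b • Q) t = a ^ t • P + b ^ t • Q := by
  have hPQ : P * Q = 0 := by
    simpa [hP.eq, hQ.eq] using congrArg conjTranspose hQP
  have he : OrthogonalIdempotents ![P, Q] :=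
    ⟨Fin.forall_fin_two.2 ⟨hPP, hQQ⟩, fun i j hij => by
      fin_cases i <;> fin_cases j <;> simp_all⟩
  have hsum (c : Fin 2 → ℝ) : ∑ i, c i • ![P, Q] i = c 0 • P + c 1 • Q := by
    simp [Fin.sum_univ_two]
  have hM : (a • P + b • Q).IsHermitian :=
    (IsSelfAdjoint.all a).smul hP |>.add <| (IsSelfAdjoint.all b).smul hQ
  have h := he.cfc_sum_smul ![a, b] (f := fun x : ℝ => x ^ t) (Real.zero_rpow ht)
    (by simpa [hsum] using hM.isSelfAdjoint)
  simp only [hsum, Matrix.cons_val_zero, Matrix.cons_val_one] at h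
  rw [mpow_eq_cfc_rpow hM ht, h]

end Matrix

section Kronecker

variable {α l m : Type*} [CommRing α] {X : Matrix l l α} {Y : Matrix m m α}

lemma Matrix.IsHermitian.kronecker [StarRing α] (hX : X.IsHermitian) (hY : Y.IsHermitian) :
    (X ⊗ₖ Y).IsHermitian := by
  rw [IsHermitian, conjTranspose_kronecker, hX.eq, hY.eq]

lemma IsIdempotentElem.kronecker [Fintype l] [Fintype m] (hX : IsIdempotentElem X)
    (hY : IsIdempotentElem Y) :
    IsIdempotentElem (X ⊗ₖ Y) := by
  rw [IsIdempotentElem, ← mul_kronecker_mul, hX.eq, hY.eq]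

end Kronecker

section PartialTrace

variable {A B : Type*} [Fintype A]

lemma ptrA_smul_add_smul (a b : ℝ) (M N : Matrix (A × B) (A × B) ℂ) :
    ptrA (a • M + b • N) = a • ptrA M + b • ptrA N := by
  ext
  simp [ptrA, Finset.sum_add_distrib, Finset.smul_sum]

lemma ptrA_one_kronecker [DecidableEq A] (Y : Matrix B B ℂ) :
    ptrA ((1 : Matrix A A ℂ) ⊗ₖ Y) = (Fintype.card A : ℝ) • Y := by
  ext
  simp [ptrA, one_apply]

end PartialTrace

section VecMulVec

variable {n : Type*} (v : n → ℂ)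

lemma isHermitian_vecMulVec_star : (vecMulVec v (star v)).IsHermitian := by
  simp [IsHermitian, conjTranspose_vecMulVec]

lemma isIdempotentElem_vecMulVec_star [Fintype n] (hv : star v ⬝ᵥ v = 1) :
    IsIdempotentElem (vecMulVec v (star v)) := by
  rw [IsIdempotentElem, vecMulVec_mul_vecMulVec, hv, one_smul]

end VecMulVec

section Erasure

variable (d : ℕ)

noncomputable def maxEntangled : Fin d × Fin (d + 1) → ℂ := fun x =>
  if x.2 = Fin.castSucc x.1 then (((Real.sqrt d)⁻¹ : ℝ) : ℂ) else 0

def erasureProj : Matrix (Fin (d + 1)) (Fin (d + 1)) ℂ :=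
  single (Fin.last d) (Fin.last d) 1

lemma erasureProj_isHermitian : (erasureProj d).IsHermitian := by
  simp [IsHermitian, erasureProj]

lemma isIdempotentElem_erasureProj : IsIdempotentElem (erasureProj d) := by
  simp [IsIdempotentElem, erasureProj]

lemma maxEntangled_last (a : Fin d) : maxEntangled d (a, Fin.last d) = 0 := by
  simp [maxEntangled, (Fin.castSucc_ne_last a).symm]

lemma maxEntangled_mul_star (a : Fin d) (b b' : Fin (d + 1)) :
    maxEntangled d (a, b) * starRingEnd ℂ (maxEntangled d (a, b')) =
      if b = a.castSucc ∧ b' = a.castSucc then (d : ℂ)⁻¹ else 0 := by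
  simp only [maxEntangled, ite_and]
  split_ifs <;> simp [← Complex.ofReal_mul, ← mul_inv, Real.mul_self_sqrt (Nat.cast_nonneg d)]

lemma star_dotProduct_maxEntangled (hd : d ≠ 0) :
    star (maxEntangled d) ⬝ᵥ maxEntangled d = 1 := by
  simp only [dotProduct, Pi.star_apply, RCLike.star_def, mul_comm (starRingEnd ℂ _),
    maxEntangled_mul_star, Fintype.sum_prod_type]
  simp [mul_inv_cancel₀ ((Nat.cast_ne_zero (R := ℂ)).2 hd)]

noncomputable def maxEntangledProj : Matrix (Fin d × Fin (d + 1)) (Fin d × Fin (d + 1)) ℂ :=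
  vecMulVec (maxEntangled d) (star (maxEntangled d))

def erasedProj : Matrix (Fin d × Fin (d + 1)) (Fin d × Fin (d + 1)) ℂ :=
  (1 : Matrix (Fin d) (Fin d) ℂ) ⊗ₖ erasureProj d

lemma maxEntangledProj_isHermitian : (maxEntangledProj d).IsHermitian :=
  isHermitian_vecMulVec_star _

lemma isIdempotentElem_maxEntangledProj (hd : d ≠ 0) : IsIdempotentElem (maxEntangledProj d) :=
  isIdempotentElem_vecMulVec_star _ (star_dotProduct_maxEntangled d hd)

lemma erasedProj_isHermitian : (erasedProj d).IsHermitian :=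
  isHermitian_one.kronecker (erasureProj_isHermitian d)

lemma isIdempotentElem_erasedProj : IsIdempotentElem (erasedProj d) :=
  IsIdempotentElem.one.kronecker (isIdempotentElem_erasureProj d)

lemma erasedProj_mul_maxEntangledProj : erasedProj d * maxEntangledProj d = 0 := by
  have hv : erasedProj d *ᵥ maxEntangled d = 0 := by
    ext
    simp [erasedProj, mulVec, dotProduct, erasureProj, Fintype.sum_prod_type, one_apply,
      single_apply, ite_and, maxEntangled_last]
  rw [maxEntangledProj, mul_vecMulVec, hv, zero_vecMulVec]

lemma ptrA_maxEntangledProj : ptrA (maxEntangledProj d) = (d : ℝ)⁻¹ • (1 - erasureProj d) := by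
  ext b b'
  induction b using Fin.lastCases with
  | last =>
    simp [maxEntangledProj, ptrA, vecMulVec_apply, maxEntangled_last, erasureProj, one_apply,
      single_apply]
  | cast a =>
    simp [maxEntangledProj, ptrA, vecMulVec_apply, maxEntangled_mul_star, erasureProj, one_apply,
      (Fin.castSucc_ne_last a).symm, ite_and, eq_comm]

lemma ptrA_erasedProj : ptrA (erasedProj d) = (d : ℝ) • erasureProj d := by
  rw [erasedProj, ptrA_one_kronecker, Fintype.card_fin]

lemma trR_mpow_ptrA_mpow_erasure (hd : d ≠ 0) (a b : ℝ) {t : ℝ} (ht : t ≠ 0) :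
    trR (mpow (ptrA (mpow (a • maxEntangledProj d + b • erasedProj d) t)) (1 / t)) =
      (a ^ t * (d : ℝ)⁻¹) ^ t⁻¹ * d + (b ^ t * d) ^ t⁻¹ := by
  have hE : erasureProj d * (1 - erasureProj d) = 0 := by
    rw [mul_sub, mul_one, (isIdempotentElem_erasureProj d).eq, sub_self]
  rw [mpow_smul_add_smul (maxEntangledProj_isHermitian d) (erasedProj_isHermitian d)
      (isIdempotentElem_maxEntangledProj d hd) (isIdempotentElem_erasedProj d)
      (erasedProj_mul_maxEntangledProj d) _ _ ht,
    ptrA_smul_add_smul, ptrA_maxEntangledProj, ptrA_erasedProj, smul_smul, smul_smul,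
    mpow_smul_add_smul (isHermitian_one.sub (erasureProj_isHermitian d))
      (erasureProj_isHermitian d) (isIdempotentElem_erasureProj d).one_sub
      (isIdempotentElem_erasureProj d) hE _ _ (one_div_ne_zero ht)]
  simp [trR, erasureProj]

end Erasure

lemma rpow_sibson_identity {d x y t : ℝ} (hd : 0 < d) (hx : 0 ≤ x) (hy : 0 ≤ y) (ht : t ≠ 0) :
    (x ^ t * d⁻¹) ^ t⁻¹ * d + ((y / d) ^ t * d) ^ t⁻¹ =
      x * d ^ ((t - 1) / t) + y * d ^ ((1 - t) / t) := by
  have hyd : 0 ≤ y / d := by positivity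
  rw [Real.mul_rpow (Real.rpow_nonneg hx _) (by positivity), Real.rpow_rpow_inv hx ht,
    Real.mul_rpow (Real.rpow_nonneg hyd _) hd.le, Real.rpow_rpow_inv hyd ht,
    Real.inv_rpow hd.le, show (t - 1) / t = 1 - t⁻¹ by field_simp,
    show (1 - t) / t = t⁻¹ - 1 by field_simp, Real.rpow_sub hd, Real.rpow_sub_one hd.ne',
    Real.rpow_one]
  field_simp

/-- Single-use Sibson value for the quantum erasure channel with maximally
entangled input: `Tr[(Tr_A ρ^λ)^{1/λ}] = (1−p)·d^{(λ−1)/λ} + p·d^{(1−λ)/λ}`,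
equivalently `−ln Tr[(Tr_A ρ^{1/(s+1)})^{s+1}] = −ln((1−p)d^{−s} + p d^{s})`
with `s = 1/λ − 1`. -/
theorem erasure_single_use_sibson (d : ℕ) (hd : 1 ≤ d)
    (p lam : ℝ) (hp₀ : 0 ≤ p) (hp₁ : p ≤ 1) (hlam : 1 < lam)
    (φ : Fin d × Fin (d + 1) → ℂ)
    (hφ : φ = fun x : Fin d × Fin (d + 1) =>
      if x.2 = Fin.castSucc x.1 then (((Real.sqrt d)⁻¹ : ℝ) : ℂ) else 0)
    (ρ : Matrix (Fin d × Fin (d + 1)) (Fin d × Fin (d + 1)) ℂ)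
    (hρ : ρ = ((1 - p : ℝ) : ℂ) • Matrix.vecMulVec φ (star φ) +
      ((p / d : ℝ) : ℂ) •
        ((1 : Matrix (Fin d) (Fin d) ℂ) ⊗ₖ
          Matrix.single (Fin.last d) (Fin.last d) (1 : ℂ))) :
    trR (mpow (ptrA (mpow ρ lam)) (1 / lam)) =
        (1 - p) * (d : ℝ) ^ ((lam - 1) / lam) + p * (d : ℝ) ^ ((1 - lam) / lam) ∧
      -Real.log (trR (mpow (ptrA (mpow ρ (1 / (1 / lam - 1 + 1)))) (1 / lam - 1 + 1))) =
        -Real.log ((1 - p) * (d : ℝ) ^ (-(1 / lam - 1)) + p * (d : ℝ) ^ (1 / lam - 1)) := by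
  have hd' : (0 : ℝ) < d := by exact_mod_cast hd
  have hlam' : lam ≠ 0 := by positivity
  have hρ' : ρ = (1 - p) • maxEntangledProj d + (p / d) • erasedProj d := by
    rw [hρ, hφ, Complex.coe_smul, Complex.coe_smul]
    rfl
  have key : trR (mpow (ptrA (mpow ρ lam)) (1 / lam)) =
      (1 - p) * (d : ℝ) ^ ((lam - 1) / lam) + p * (d : ℝ) ^ ((1 - lam) / lam) := by
    rw [hρ', trR_mpow_ptrA_mpow_erasure d (by omega) _ _ hlam']
    exact rpow_sibson_identity hd' (by linarith) hp₀ hlam'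
  refine ⟨key, ?_⟩
  rw [show 1 / lam - 1 + 1 = 1 / lam by ring, one_div_one_div, key,
    show -(1 / lam - 1) = (lam - 1) / lam by field_simp; ring,
    show 1 / lam - 1 = (1 - lam) / lam by field_simp]
end
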